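/- arXiv:1907.13027 — 2 statements merged into one kernel-verified Lean document; each statement's English description precedes it below -/
import Mathlib

section
/- Let n ≥ 3 be an integer and p > 1 a real number, and assume that either (n ≥ 4 and n < (√((p−1)(p+7)) + p + 5)/2) or (n = 3 and p < 3). Then there exists a real number α with max(0, n−p) < α < n−1 (in particular α nonnegative and α ∈ (n−p, n−1)) such that: 4(n−1−α)² > (α−2)²(n−1)(p−1) if n > p, and 4(n−1−α)² > (α−2)²(p−1)² if n ≤ p. -/
/-- **Appendix A** (Miraglio): under condition (1.3) there exists an admissible exponent
`α ∈ (max(0, n-p), n-1)` for the weighted gradient estimate. -/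
theorem exists_admissible_alpha
    (n : ℕ) (hn : 3 ≤ n) (p : ℝ) (hp : 1 < p)
    (hcond : (4 ≤ n ∧ (n : ℝ) < (Real.sqrt ((p - 1) * (p + 7)) + p + 5) / 2)
      ∨ (n = 3 ∧ p < 3)) :
    ∃ α : ℝ, max 0 ((n : ℝ) - p) < α ∧ α < (n : ℝ) - 1 ∧
      (p < (n : ℝ) →
        4 * ((n : ℝ) - 1 - α) ^ 2 > (α - 2) ^ 2 * ((n : ℝ) - 1) * (p - 1)) ∧
      ((n : ℝ) ≤ p →
        4 * ((n : ℝ) - 1 - α) ^ 2 > (α - 2) ^ 2 * (p - 1) ^ 2) := by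
  have hN3 : (3:ℝ) ≤ (n : ℝ) := by exact_mod_cast hn
  set N : ℝ := (n : ℝ) with hNdef
  have hp1 : (0:ℝ) < p - 1 := by linarith
  rcases le_or_gt N p with hnp | hpn
  · -- case n ≤ p : take α = 2
    have hn4 : 4 ≤ n := by
      rcases hcond with ⟨h4, _⟩ | ⟨h3, hp3⟩
      · exact h4
      · exfalso
        have : N = 3 := by rw [hNdef, h3]; norm_num
        linarith
    have hN4 : (4:ℝ) ≤ N := by rw [hNdef]; exact_mod_cast hn4
    refine ⟨2, ?_, by linarith, fun h => absurd h (not_lt.2 hnp), fun _ => ?_⟩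
    · exact max_lt_iff.mpr ⟨by norm_num, by linarith⟩
    · have h1 : (1:ℝ) ≤ N - 1 - 2 := by linarith
      nlinarith
  · -- case p < n
    set k : ℝ := Real.sqrt ((N - 1) * (p - 1)) with hkdef
    have hk0 : 0 ≤ k := Real.sqrt_nonneg _
    have hk2 : k ^ 2 = (N - 1) * (p - 1) := Real.sq_sqrt (by nlinarith)
    -- the key strict inequality
    have hA : |N - p - 2| * k < 2 * (p - 1) := by
      have key : (N - p - 2) ^ 2 * (N - 1) < 4 * (p - 1) := by
        rcases le_or_gt (N - p - 2) 0 with h0 | h0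
        · -- here 0 < N - p ≤ 2
          nlinarith [mul_pos (sub_pos.2 hpn) hp1,
            mul_nonneg (show (0:ℝ) ≤ 2 - (N - p) by linarith)
              (show (0:ℝ) ≤ N - 3 by linarith),
            mul_nonneg (mul_nonneg (show (0:ℝ) ≤ N - p by linarith)
              (show (0:ℝ) ≤ 2 - (N - p) by linarith)) (show (0:ℝ) ≤ N - 3 by linarith),
            mul_pos (sub_pos.2 hpn) (mul_pos (sub_pos.2 hpn) hp1)]
        · -- here N - p > 2, so n ≥ 4 and the sqrt condition must hold
          obtain ⟨hn4, hs⟩ : 4 ≤ n ∧ N < (Real.sqrt ((p - 1) * (p + 7)) + p + 5) / 2 := by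
            rcases hcond with h | ⟨h3, hp3⟩
            · exact h
            · exfalso
              have : N = 3 := by rw [hNdef, h3]; norm_num
              linarith
          set s : ℝ := Real.sqrt ((p - 1) * (p + 7)) with hsdef
          have hs0 : 0 ≤ s := Real.sqrt_nonneg _
          have hs2 : s ^ 2 = (p - 1) * (p + 7) := Real.sq_sqrt (by nlinarith)
          have h1 : 2 * N - p - 5 < s := by linarith
          have h2 : 0 ≤ 2 * N - p - 5 := by linarith
          have h3' : (2 * N - p - 5) ^ 2 < (p - 1) * (p + 7) := by
            calc (2 * N - p - 5) ^ 2 < s ^ 2 := by nlinarith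
              _ = (p - 1) * (p + 7) := hs2
          have K' : 0 < 2 * (p - 1) - (N - p - 2) ^ 2 - (N - p - 2) * (p - 1) := by
            nlinarith
          nlinarith [mul_pos (show (0:ℝ) < 2 + (N - p - 2) by linarith) K']
      have habs : (|N - p - 2| * k) ^ 2 < (2 * (p - 1)) ^ 2 := by
        calc (|N - p - 2| * k) ^ 2 = (N - p - 2) ^ 2 * k ^ 2 := by
              rw [mul_pow, sq_abs]
          _ = (N - p - 2) ^ 2 * ((N - 1) * (p - 1)) := by rw [hk2]
          _ < (2 * (p - 1)) ^ 2 := by nlinarith [key, hp1]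
      exact lt_of_pow_lt_pow_left₀ 2 (by linarith) habs
    set c : ℝ := 2 * (p - 1) - |N - p - 2| * k with hcdef
    have hc : 0 < c := by linarith
    have hden : (0:ℝ) < 2 * (2 + k) := by linarith
    set δ : ℝ := c / (2 * (2 + k)) with hδdef
    have hδ : 0 < δ := div_pos hc hden
    have hδk : δ * (2 + k) = c / 2 := by
      rw [hδdef]; field_simp
    have hδlt : δ < p - 1 := by
      rw [hδdef, div_lt_iff₀ hden]
      have hAk : 0 ≤ |N - p - 2| * k := mul_nonneg (abs_nonneg _) hk0
      nlinarith
    refine ⟨N - p + δ, ?_, by linarith, fun _ => ?_, fun h => absurd h (not_le.2 hpn)⟩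
    · exact max_lt_iff.mpr ⟨by linarith, by linarith⟩
    · -- main inequality
      have habs2 : |N - p + δ - 2| ≤ |N - p - 2| + δ := by
        calc |N - p + δ - 2| = |(N - p - 2) + δ| := by ring_nf
          _ ≤ |N - p - 2| + |δ| := abs_add_le _ _
          _ = |N - p - 2| + δ := by rw [abs_of_pos hδ]
      have hmain : |N - p + δ - 2| * k < 2 * (N - 1 - (N - p + δ)) := by
        have h1 : |N - p + δ - 2| * k ≤ (|N - p - 2| + δ) * k :=
          mul_le_mul_of_nonneg_right habs2 hk0
        have h2 : (|N - p - 2| + δ) * k = |N - p - 2| * k + δ * k := by ring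
        have h3 : 2 * (N - 1 - (N - p + δ)) = 2 * (p - 1) - 2 * δ := by ring
        have h4 : |N - p - 2| * k + δ * k + (2 * δ) = 2 * (p - 1) - c + δ * (2 + k) := by
          rw [hcdef]; ring
        rw [h3]
        have := hδk
        nlinarith
      have hpos : 0 ≤ |N - p + δ - 2| * k := mul_nonneg (abs_nonneg _) hk0
      have hsq : (|N - p + δ - 2| * k) ^ 2 < (2 * (N - 1 - (N - p + δ))) ^ 2 :=
        pow_lt_pow_left₀ hmain hpos two_ne_zero
      have heq : (|N - p + δ - 2| * k) ^ 2
          = (N - p + δ - 2) ^ 2 * ((N - 1) * (p - 1)) := by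
        rw [mul_pow, sq_abs, hk2]
      have h5 : (2 * (N - 1 - (N - p + δ))) ^ 2 = 4 * (N - 1 - (N - p + δ)) ^ 2 := by ring
      rw [heq, h5] at hsq
      have h6 : (N - p + δ - 2) ^ 2 * (N - 1) * (p - 1)
          = (N - p + δ - 2) ^ 2 * ((N - 1) * (p - 1)) := by ring
      linarith [hsq, h6.le, h6.ge]
end

section
/- Let n ≥ 2 be an integer and p > 1 a real number, and assume that either (n ≥ 3 and n < p + 4p/(p−1)) or (n = 2 and 1 < p < 3). Then there exists a real number α with max(0, n−p) < α < n−1 (in particular α nonnegative and α ∈ (n−p, n−1)) such that: 4(n−1) > (α−2)²(p−1) if n > p, and 4(n−1)² > (α−2)²(p−1)² if n ≤ p. -/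
/-- **Remark A.1** (Miraglio): under the radial condition (1.8) there exists an admissible
exponent `α ∈ (max(0, n-p), n-1)` for the radial weighted gradient estimate. -/
theorem exists_admissible_alpha_radial
    (n : ℕ) (hn : 2 ≤ n) (p : ℝ) (hp : 1 < p)
    (hcond : (3 ≤ n ∧ (n : ℝ) < p + 4 * p / (p - 1))
      ∨ (n = 2 ∧ 1 < p ∧ p < 3)) :
    ∃ α : ℝ, max 0 ((n : ℝ) - p) < α ∧ α < (n : ℝ) - 1 ∧
      (p < (n : ℝ) → 4 * ((n : ℝ) - 1) > (α - 2) ^ 2 * (p - 1)) ∧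
      ((n : ℝ) ≤ p → 4 * ((n : ℝ) - 1) ^ 2 > (α - 2) ^ 2 * (p - 1) ^ 2) := by
  have hn2 : (2:ℝ) ≤ (n:ℝ) := by exact_mod_cast hn
  have hp1 : (0:ℝ) < p - 1 := by linarith
  rcases le_or_gt (n:ℝ) p with hnp | hnp
  · -- case n ≤ p : pick α near 2
    set m : ℝ := 2 * ((n:ℝ) - 1) / (p - 1) with hm
    have hm0 : 0 < m := by
      apply div_pos <;> linarith
    have hmp : m * (p - 1) = 2 * ((n:ℝ) - 1) := div_mul_cancel₀ _ (ne_of_gt hp1)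
    have h2m : 2 - m < (n:ℝ) - 1 := by
      rcases hcond with ⟨h3, _⟩ | ⟨h2, _, hp3⟩
      · have h3' : (3:ℝ) ≤ (n:ℝ) := by exact_mod_cast h3
        nlinarith
      · have : (n:ℝ) = 2 := by exact_mod_cast h2
        nlinarith
    set a : ℝ := max 0 (2 - m) with ha
    set b : ℝ := min ((n:ℝ) - 1) (2 + m) with hb
    have hab : a < b := by
      apply lt_min
      · apply max_lt <;> linarith
      · apply max_lt <;> linarith
    refine ⟨(a + b) / 2, ?_, ?_, ?_, ?_⟩
    · have : max 0 ((n:ℝ) - p) = 0 := max_eq_left (by linarith)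
      rw [this]
      have h0a : (0:ℝ) ≤ a := le_max_left _ _
      linarith
    · have hbn : b ≤ (n:ℝ) - 1 := min_le_left _ _
      linarith
    · intro h; linarith
    · intro _
      have h1 : 2 - m ≤ a := le_max_right _ _
      have h2 : b ≤ 2 + m := min_le_right _ _
      set α : ℝ := (a + b) / 2 with hα
      have hl : 2 - m < α := by simp only [hα]; linarith
      have hr : α < 2 + m := by simp only [hα]; linarith
      have hsq : (α - 2) ^ 2 < m ^ 2 := by nlinarith
      have hpos : (0:ℝ) < (p - 1) ^ 2 := by positivity
      have := mul_lt_mul_of_pos_right hsq hpos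
      nlinarith [hmp]
  · -- case p < n : pick α = (n - p) + ε
    set t : ℝ := (n:ℝ) - p with ht
    have ht0 : 0 < t := by linarith
    have htp : t * (p - 1) < 4 * p := by
      rcases hcond with ⟨h3, hlt⟩ | ⟨h2, _, hp3⟩
      · have : (n:ℝ) - p < 4 * p / (p - 1) := by linarith
        have := (lt_div_iff₀ hp1).mp this
        rw [ht]; linarith
      · have : (n:ℝ) = 2 := by exact_mod_cast h2
        rw [ht, this]; nlinarith
    have hkey : (t - 2) ^ 2 * (p - 1) < 4 * ((n:ℝ) - 1) := by nlinarith
    set d : ℝ := 4 * ((n:ℝ) - 1) - (t - 2) ^ 2 * (p - 1) with hd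
    have hd0 : 0 < d := by linarith
    set B : ℝ := |t - 2| with hB
    have hB0 : 0 ≤ B := abs_nonneg _
    have hB1 : t - 2 ≤ B := le_abs_self _
    have hden : (0:ℝ) < (2 * B + 2) * (p - 1) := by positivity
    set ε : ℝ := min 1 (min ((p - 1) / 2) (d / ((2 * B + 2) * (p - 1)))) with hε
    have hε0 : 0 < ε := by
      apply lt_min one_pos
      apply lt_min (by linarith)
      exact div_pos hd0 hden
    have hε1 : ε ≤ 1 := min_le_left _ _
    have hεp : ε ≤ (p - 1) / 2 := le_trans (min_le_right _ _) (min_le_left _ _)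
    have hεd : ε * ((2 * B + 2) * (p - 1)) ≤ d := by
      have h : ε ≤ d / ((2 * B + 2) * (p - 1)) :=
        le_trans (min_le_right _ _) (min_le_right _ _)
      exact (le_div_iff₀ hden).mp h
    refine ⟨t + ε, ?_, ?_, ?_, ?_⟩
    · have : max 0 ((n:ℝ) - p) = (n:ℝ) - p := max_eq_right (by linarith)
      rw [this]; simp only [ht]; linarith
    · linarith
    · intro _
      have h1 : 0 ≤ (B - (t - 2)) * (ε * (p - 1)) :=
        mul_nonneg (by linarith) (mul_nonneg hε0.le hp1.le)
      have h2 : 0 ≤ (1 - ε) * (ε * (p - 1)) :=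
        mul_nonneg (by linarith) (mul_nonneg hε0.le hp1.le)
      have h3 : 0 < ε * (p - 1) := mul_pos hε0 hp1
      nlinarith [hεd, h1, h2, h3]
    · intro h; linarith
end
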